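/- Let n ≥ 3, m ≥ 1, M = circ(−2,1,0,…,0,1). Suppose X(t) = g(t)X^0 is a solution of dX/dt = (−1)^{m+1}M^m X with X^0 ∈ ℂ^n nonzero, g : ℝ → ℝ differentiable, g(0)=1, and g(t) ≠ 0 for all t. Then there exists k ∈ {0,1,…,n−1} such that g(t) = e^{λ_{m,k} t} and X^0 lies in the eigenspace of (−1)^{m+1}M^m for λ_{m,k}; for 1 ≤ k ≤ n−1 with k ≠ n−k this eigenspace is the span of P_k and P_{n−k}. -/

import Mathlib

open Complex Real

/-- The n×n circulant matrix circ(−2,1,0,…,0,1) over ℂ. -/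
def cycMC (n : ℕ) [NeZero n] : Matrix (Fin n) (Fin n) ℂ :=
  Matrix.of fun i j =>
    (if i = j then (-2 : ℂ) else 0) + (if i = j + 1 then 1 else 0) + (if j = i + 1 then 1 else 0)

/-- The discrete Fourier vector P_k. -/
noncomputable def fourierP (n : ℕ) (k : Fin n) : Fin n → ℂ :=
  fun j => Complex.exp (2 * Real.pi * Complex.I / n) ^ ((j : ℕ) * (k : ℕ))

/-- The eigenvalue λ_{m,k} = −4^m sin^{2m}(πk/n). -/
noncomputable def lam (n m k : ℕ) : ℝ := -(4 : ℝ) ^ m * Real.sin (Real.pi * k / n) ^ (2 * m)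

/-!
The Fourier vectors `P_k` are eigenvectors of the circulant `M = cycMC n`: since
`P_k (i ± 1) = P_k i * P_k (±1)` and `P_k (-1) = (P_k 1)⁻¹`, the eigenvalue is
`P_k 1 + (P_k 1)⁻¹ - 2 = -4 sin² (πk/n)`, so `A = (-1)^(m+1) M^m` has eigenvalue `λ_{m,k}`
on `P_k`. They are the rows of the Vandermonde matrix of the distinct roots of unity
`P_k 1 = ζ^k`, hence a basis, so every eigenvalue of `A` is some `λ_{m,k}` and its eigenspace is
spanned by the `P_j` with `λ_{m,j} = λ_{m,k}`. For `m ≠ 0` this means `x + x⁻¹ = y + y⁻¹` for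
`x = P_j 1`, `y = P_k 1`, i.e. `x = y` or `x y = P_{j+k} 1 = 1`, i.e. `j = ±k`.

Substituting `X = g X⁰` into the flow gives `g' t • X⁰ = g t • A X⁰`. At `t = 0` this makes
`X⁰` an eigenvector of `A` for `g' 0 = λ_{m,k}`, and then `g' = λ_{m,k} g`, so
`g t = exp (λ_{m,k} t)`.
-/

open Matrix

lemma add_inv_eq_add_inv_iff {K : Type*} [Field K] {x y : K} (hx : x ≠ 0) (hy : y ≠ 0) :
    x + x⁻¹ = y + y⁻¹ ↔ x = y ∨ x * y = 1 := by
  have hxy : x + x⁻¹ - (y + y⁻¹) = (x - y) * (x * y - 1) / (x * y) := by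
    field_simp
    ring
  rw [← sub_eq_zero, hxy]
  simp [hx, hy, sub_eq_zero]

theorem Module.Basis.apply_eq_smul_iff_mem_span_image {ι R M : Type*} [CommRing R]
    [NoZeroDivisors R] [AddCommGroup M] [Module R M] (b : Module.Basis ι R M) {f : M →ₗ[R] M}
    {μ : ι → R} (hf : ∀ i, f (b i) = μ i • b i) {c : R} {v : M} :
    f v = c • v ↔ v ∈ Submodule.span R (b '' {i | μ i = c}) := by
  have hrepr : ∀ i, b.repr (f v) i = μ i * b.repr v i := fun i => by
    have : (b.coord i).comp f = μ i • b.coord i := b.ext fun j => by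
      by_cases hij : j = i
      · simp [hf, hij]
      · simp [hf, Ne.symm hij]
    exact LinearMap.congr_fun this v
  rw [b.mem_span_image, ← b.repr.injective.eq_iff, Finsupp.ext_iff]
  simp only [hrepr, map_smul, Finsupp.smul_apply, smul_eq_mul, Set.subset_def,
    Finset.mem_coe, Finsupp.mem_support_iff, Set.mem_ofPred_eq]
  exact forall_congr' fun i => by rw [mul_eq_mul_right_iff, or_comm, or_iff_not_imp_left]

theorem Module.Basis.exists_eq_of_apply_eq_smul {ι R M : Type*} [CommRing R]
    [NoZeroDivisors R] [AddCommGroup M] [Module R M] (b : Module.Basis ι R M) {f : M →ₗ[R] M}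
    {μ : ι → R} (hf : ∀ i, f (b i) = μ i • b i) {c : R} {v : M} (hv : v ≠ 0)
    (h : f v = c • v) : ∃ i, μ i = c := by
  by_contra! hne
  have hempty : {i | μ i = c} = (∅ : Set ι) := Set.eq_empty_of_forall_notMem hne
  rw [b.apply_eq_smul_iff_mem_span_image hf, hempty, Set.image_empty,
    Submodule.span_empty, Submodule.mem_bot] at h
  exact hv h

theorem Matrix.pow_mulVec_eq_pow_smul {ι R : Type*} [Fintype ι] [DecidableEq ι] [CommSemiring R]
    {A : Matrix ι ι R} {v : ι → R} {c : R} (h : A *ᵥ v = c • v) (m : ℕ) :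
    (A ^ m) *ᵥ v = c ^ m • v := by
  induction m with
  | zero => simp
  | succ m ih =>
    rw [pow_succ', ← Matrix.mulVec_mulVec, ih, Matrix.mulVec_smul, h, smul_smul, pow_succ]

lemma eq_mul_exp_of_hasDerivAt {g : ℝ → ℝ} {r : ℝ} (hg : ∀ t, HasDerivAt g (r * g t) t)
    (t : ℝ) : g t = g 0 * Real.exp (r * t) := by
  have hconst : ∀ s, HasDerivAt (fun s => g s * Real.exp (-r * s)) 0 s := fun s =>
    ((hg s).mul ((hasDerivAt_id' s).const_mul (-r)).exp).congr_deriv (by ring)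
  have := is_const_of_deriv_eq_zero (fun s => (hconst s).differentiableAt)
    (fun s => (hconst s).deriv) t 0
  rw [mul_zero, Real.exp_zero, mul_one] at this
  rw [← this, mul_assoc, ← Real.exp_add, neg_mul, neg_add_cancel, Real.exp_zero, mul_one]

section FourierVectors

variable {n : ℕ}

lemma fourierP_comm (k j : Fin n) : fourierP n k j = fourierP n j k := by
  rw [fourierP, fourierP, Nat.mul_comm]

lemma fourierP_apply_ne_zero (k j : Fin n) : fourierP n k j ≠ 0 :=
  pow_ne_zero _ (Complex.exp_ne_zero _)

variable [NeZero n]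

lemma fourierP_eq_pow_of_modEq {k j : Fin n} {a : ℕ} (h : (j : ℕ) * k ≡ a [MOD n]) :
    fourierP n k j = Complex.exp (2 * π * I / n) ^ a := by
  have hζ := Complex.isPrimitiveRoot_exp n (NeZero.ne n)
  rw [fourierP, (hζ.isOfFinOrder (NeZero.ne n)).pow_eq_pow_iff_modEq, ← hζ.eq_orderOf]
  exact h

@[simp]
lemma fourierP_apply_zero (k : Fin n) : fourierP n k 0 = 1 := by
  simp [fourierP]

@[simp]
lemma fourierP_zero_apply (j : Fin n) : fourierP n 0 j = 1 := by
  simp [fourierP]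

lemma fourierP_apply_one (k : Fin n) : fourierP n k 1 = Complex.exp (2 * π * I / n) ^ (k : ℕ) :=
  fourierP_eq_pow_of_modEq <| by simpa using (Nat.mod_modEq 1 n).mul_right (k : ℕ)

lemma fourierP_apply_add (k a b : Fin n) :
    fourierP n k (a + b) = fourierP n k a * fourierP n k b := by
  have hval : ((a + b : Fin n) : ℕ) * k ≡ a * k + b * k [MOD n] := by
    rw [Fin.val_add, ← add_mul]
    exact (Nat.mod_modEq _ n).mul_right _
  rw [fourierP_eq_pow_of_modEq hval, pow_add]
  rfl

lemma fourierP_apply_neg (k a : Fin n) : fourierP n k (-a) = (fourierP n k a)⁻¹ := by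
  refine eq_inv_of_mul_eq_one_left ?_
  rw [← fourierP_apply_add, neg_add_cancel, fourierP_apply_zero]

lemma fourierP_add_apply (j k a : Fin n) :
    fourierP n (j + k) a = fourierP n j a * fourierP n k a := by
  simp only [fourierP_comm _ a, fourierP_apply_add]

lemma fourierP_apply_one_injective : Function.Injective fun k : Fin n => fourierP n k 1 := by
  intro j k h
  simp only [fourierP_apply_one] at h
  exact Fin.ext <| (Complex.isPrimitiveRoot_exp n (NeZero.ne n)).pow_inj j.isLt k.isLt h

lemma linearIndependent_fourierP : LinearIndependent ℂ (fourierP n) := by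
  have hv : Function.Injective fun k : Fin n => fourierP n k 1 := fourierP_apply_one_injective
  have := Matrix.linearIndependent_rows_of_det_ne_zero (Matrix.det_vandermonde_ne_zero_iff.2 hv)
  have hrows : (fun k => Matrix.vandermonde (fun k : Fin n => fourierP n k 1) k) = fourierP n := by
    ext k j
    rw [Matrix.vandermonde_apply, fourierP_apply_one, fourierP, ← pow_mul, Nat.mul_comm]
  rwa [hrows] at this

noncomputable def fourierPBasis (n : ℕ) [NeZero n] : Module.Basis (Fin n) ℂ (Fin n → ℂ) :=
  basisOfLinearIndependentOfCardEqFinrank' (fourierP n) linearIndependent_fourierP (by simp)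

@[simp]
lemma coe_fourierPBasis : ⇑(fourierPBasis n) = fourierP n :=
  coe_basisOfLinearIndependentOfCardEqFinrank' ..

lemma cycMC_mulVec_apply (v : Fin n → ℂ) (i : Fin n) :
    (cycMC n *ᵥ v) i = v (i + 1) + v (i - 1) - 2 * v i := by
  have hprev : ∀ j : Fin n, i = j + 1 ↔ j = i - 1 := fun j => by rw [eq_sub_iff_add_eq, eq_comm]
  simp only [Matrix.mulVec, dotProduct, cycMC, Matrix.of_apply, add_mul, ite_mul, one_mul,
    zero_mul, Finset.sum_add_distrib, hprev, Finset.sum_ite_eq, Finset.sum_ite_eq',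
    Finset.mem_univ, if_true]
  ring

lemma cycMC_mulVec_fourierP (k : Fin n) :
    cycMC n *ᵥ fourierP n k = (fourierP n k 1 + (fourierP n k 1)⁻¹ - 2) • fourierP n k := by
  ext i
  rw [cycMC_mulVec_apply, Pi.smul_apply, smul_eq_mul, sub_eq_add_neg i, fourierP_apply_add,
    fourierP_apply_add, fourierP_apply_neg]
  ring

lemma fourierP_apply_one_add_inv (k : Fin n) :
    fourierP n k 1 + (fourierP n k 1)⁻¹ - 2 = ((-4 * Real.sin (π * k / n) ^ 2 : ℝ) : ℂ) := by
  set θ : ℝ := π * k / n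
  have h : fourierP n k 1 = Complex.exp ((2 * θ : ℝ) * I) := by
    rw [fourierP_apply_one, ← Complex.exp_nat_mul]
    congr 1
    push_cast [θ]
    ring
  rw [h, ← Complex.exp_neg, ← neg_mul, ← Complex.two_cos]
  push_cast
  rw [Complex.cos_two_mul]
  linear_combination 4 * Complex.sin_sq_add_cos_sq (θ : ℂ)

lemma sin_sq_eq_sin_sq_iff (j k : Fin n) :
    Real.sin (π * j / n) ^ 2 = Real.sin (π * k / n) ^ 2 ↔ j = k ∨ j = -k := by
  calc Real.sin (π * j / n) ^ 2 = Real.sin (π * k / n) ^ 2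
      ↔ ((-4 * Real.sin (π * j / n) ^ 2 : ℝ) : ℂ) =
          ((-4 * Real.sin (π * k / n) ^ 2 : ℝ) : ℂ) := by
        rw [Complex.ofReal_inj, mul_right_inj' (by norm_num : (-4 : ℝ) ≠ 0)]
    _ ↔ fourierP n j 1 + (fourierP n j 1)⁻¹ = fourierP n k 1 + (fourierP n k 1)⁻¹ := by
        rw [← fourierP_apply_one_add_inv, ← fourierP_apply_one_add_inv, sub_left_inj]
    _ ↔ fourierP n j 1 = fourierP n k 1 ∨ fourierP n (j + k) 1 = fourierP n 0 1 := by
        rw [add_inv_eq_add_inv_iff (fourierP_apply_ne_zero _ _) (fourierP_apply_ne_zero _ _),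
          fourierP_add_apply, fourierP_zero_apply]
    _ ↔ j = k ∨ j = -k := by
        rw [fourierP_apply_one_injective.eq_iff, fourierP_apply_one_injective.eq_iff,
          eq_neg_iff_add_eq_zero]

lemma lam_eq_lam_iff {m : ℕ} (hm : m ≠ 0) (j k : Fin n) :
    lam n m j = lam n m k ↔ j = k ∨ j = -k := by
  rw [← sin_sq_eq_sin_sq_iff, lam, lam, pow_mul, pow_mul,
    mul_right_inj' (neg_ne_zero.2 (pow_ne_zero _ four_ne_zero)),
    pow_left_inj₀ (sq_nonneg _) (sq_nonneg _) hm]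

lemma ofReal_lam (m : ℕ) (k : Fin n) :
    ((lam n m k : ℝ) : ℂ) = (-1) ^ (m + 1) * (fourierP n k 1 + (fourierP n k 1)⁻¹ - 2) ^ m := by
  rw [fourierP_apply_one_add_inv, lam]
  have hsign : (-1 : ℂ) ^ (m + 1) * (-1) ^ m = -1 := by
    rw [← pow_add, show m + 1 + m = 2 * m + 1 by ring, pow_succ, pow_mul, neg_one_sq, one_pow,
      one_mul]
  push_cast
  rw [mul_pow, neg_pow (4 : ℂ), pow_mul]
  linear_combination (-(4 : ℂ) ^ m * (Complex.sin (π * k / n) ^ 2) ^ m) * hsign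

lemma flow_mulVec_fourierP (m : ℕ) (k : Fin n) :
    ((-1 : ℂ) ^ (m + 1) • cycMC n ^ m) *ᵥ fourierP n k =
      ((lam n m k : ℝ) : ℂ) • fourierP n k := by
  rw [Matrix.smul_mulVec, Matrix.pow_mulVec_eq_pow_smul (cycMC_mulVec_fourierP k), smul_smul,
    ofReal_lam]

lemma flow_mulVecLin_fourierPBasis (m : ℕ) (k : Fin n) :
    mulVecLin ((-1 : ℂ) ^ (m + 1) • cycMC n ^ m) (fourierPBasis n k) =
      ((lam n m k : ℝ) : ℂ) • fourierPBasis n k := by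
  rw [mulVecLin_apply, coe_fourierPBasis]
  exact flow_mulVec_fourierP m k

lemma flow_mulVec_eq_smul_iff {m : ℕ} (hm : m ≠ 0) (k : Fin n) (v : Fin n → ℂ) :
    ((-1 : ℂ) ^ (m + 1) • cycMC n ^ m) *ᵥ v = ((lam n m k : ℝ) : ℂ) • v ↔
      v ∈ Submodule.span ℂ {fourierP n k, fourierP n (-k)} := by
  have hlevel : {j : Fin n | ((lam n m j : ℝ) : ℂ) = lam n m k} = {k, -k} := by
    ext j
    simp [Complex.ofReal_inj, lam_eq_lam_iff hm]
  rw [← mulVecLin_apply,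
    (fourierPBasis n).apply_eq_smul_iff_mem_span_image (flow_mulVecLin_fourierPBasis m), hlevel,
    Set.image_pair, coe_fourierPBasis]

lemma exists_lam_eq_of_flow_mulVec_eq_smul (m : ℕ) {v : Fin n → ℂ} (hv : v ≠ 0) {c : ℂ}
    (h : ((-1 : ℂ) ^ (m + 1) • cycMC n ^ m) *ᵥ v = c • v) :
    ∃ k : Fin n, ((lam n m k : ℝ) : ℂ) = c :=
  (fourierPBasis n).exists_eq_of_apply_eq_smul (flow_mulVecLin_fourierPBasis m) hv h

end FourierVectors

theorem selfsimilar_scaling_solutions_general (n m : ℕ) [NeZero n] (hm : 1 ≤ m)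
    (X0 : Fin n → ℂ) (hX0 : X0 ≠ 0) (g : ℝ → ℝ) (hg : Differentiable ℝ g)
    (hg0 : g 0 = 1)
    (hflow : ∀ (t : ℝ) (j : Fin n),
      HasDerivAt (fun s => g s • X0 j)
        ((((-1 : ℂ) ^ (m + 1)) • (cycMC n ^ m).mulVec (g t • X0)) j) t) :
    ∃ k : Fin n,
      (∀ t : ℝ, g t = Real.exp (lam n m k * t)) ∧
      (((-1 : ℂ) ^ (m + 1)) • (cycMC n ^ m)).mulVec X0 = ((lam n m k : ℝ) : ℂ) • X0 ∧
      (k ≠ 0 → k ≠ -k →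
        ∀ v : Fin n → ℂ,
          (((-1 : ℂ) ^ (m + 1)) • (cycMC n ^ m)).mulVec v = ((lam n m k : ℝ) : ℂ) • v ↔
            v ∈ Submodule.span ℂ {fourierP n k, fourierP n (-k)}) := by
  set A := (-1 : ℂ) ^ (m + 1) • cycMC n ^ m
  have hsep : ∀ t, deriv g t • X0 = g t • A *ᵥ X0 := fun t => by
    rw [((hg t).hasDerivAt.smul_const X0).unique (hasDerivAt_pi.2 (hflow t)), mulVec_smul,
      smul_mulVec, smul_comm]
  set r := deriv g 0
  have hX0eig : A *ᵥ X0 = (r : ℂ) • X0 := by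
    rw [Complex.coe_smul, hsep 0, hg0, one_smul]
  have hode : ∀ t, HasDerivAt g (r * g t) t := fun t => by
    have hscale : deriv g t • X0 = (r * g t) • X0 := by
      rw [hsep, hX0eig, Complex.coe_smul, smul_smul, mul_comm]
    rw [← smul_left_injective ℝ hX0 hscale]
    exact (hg t).hasDerivAt
  obtain ⟨k, hk⟩ := exists_lam_eq_of_flow_mulVec_eq_smul m hX0 hX0eig
  rw [Complex.ofReal_inj] at hk
  refine ⟨k, fun t => ?_, hk ▸ hX0eig, fun _ _ => flow_mulVec_eq_smul_iff (by omega) k⟩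
  rw [eq_mul_exp_of_hasDerivAt hode, hg0, one_mul, hk]

theorem selfsimilar_scaling_solutions (n m : ℕ) [NeZero n] (hn : 3 ≤ n) (hm : 1 ≤ m)
    (X0 : Fin n → ℂ) (hX0 : X0 ≠ 0) (g : ℝ → ℝ) (hg : Differentiable ℝ g)
    (hg0 : g 0 = 1) (hgne : ∀ t, g t ≠ 0)
    (hflow : ∀ (t : ℝ) (j : Fin n),
      HasDerivAt (fun s => g s • X0 j)
        ((((-1 : ℂ) ^ (m + 1)) • (cycMC n ^ m).mulVec (g t • X0)) j) t) :
    ∃ k : Fin n,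
      (∀ t : ℝ, g t = Real.exp (lam n m k * t)) ∧
      (((-1 : ℂ) ^ (m + 1)) • (cycMC n ^ m)).mulVec X0 = ((lam n m k : ℝ) : ℂ) • X0 ∧
      (k ≠ 0 → k ≠ -k →
        ∀ v : Fin n → ℂ,
          (((-1 : ℂ) ^ (m + 1)) • (cycMC n ^ m)).mulVec v = ((lam n m k : ℝ) : ℂ) • v ↔
            v ∈ Submodule.span ℂ {fourierP n k, fourierP n (-k)}) :=
  selfsimilar_scaling_solutions_general n m hm X0 hX0 g hg hg0 hflow
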